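/- arXiv:2407.19786 — 2 statements merged into one kernel-verified Lean document; each statement's English description precedes it below -/
import Mathlib

section
/- Let A ∈ M_n(𝕋) be irreducible. Then A is quasi-robust if and only if A is ultimately periodic with finite period, i.e. there exist p ≥ 1, λ ∈ ℝ and k₀ ∈ ℕ such that A^(k+p) = (p·λ) ⊗ A^(k) for all k ≥ k₀. -/
noncomputable section

/-- Max-plus (tropical) matrix product over `𝕋 = ℝ ∪ {−∞}`, embedded in `EReal`. -/
def mpMul {ι κ μ : Type*} (A : Matrix ι κ EReal) (B : Matrix κ μ EReal) :
    Matrix ι μ EReal :=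
  fun i j => ⨆ k, A i k + B k j

/-- Max-plus identity matrix. -/
def mpId {ι : Type*} [DecidableEq ι] : Matrix ι ι EReal :=
  fun i j => if i = j then (0 : EReal) else ⊥

/-- Max-plus matrix power, `mpPow A 0 = mpId`. -/
def mpPow {ι : Type*} [DecidableEq ι] (A : Matrix ι ι EReal) : ℕ → Matrix ι ι EReal
  | 0 => mpId
  | k + 1 => mpMul (mpPow A k) A

/-- Tropical scalar multiple: add the real scalar `c` to every entry. -/
def smulE {ι κ : Type*} (c : ℝ) (A : Matrix ι κ EReal) : Matrix ι κ EReal :=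
  fun i j => (c : EReal) + A i j

/-- Max-plus matrix-vector product. -/
def mpMulVec {ι κ : Type*} (A : Matrix ι κ EReal) (x : κ → EReal) : ι → EReal :=
  fun i => ⨆ j, A i j + x j

/-- The tropical factorial `k! = 1 ⊗ 2 ⊗ ⋯ ⊗ k = k(k+1)/2`. -/
def tfact (k : ℕ) : ℝ := k * (k + 1) / 2

/-- The tropical matrix exponential `e^(A) = ⨁_{k ≥ 0} (−k(k+1)/2) ⊗ A^(k)`. -/
def mexp {ι : Type*} [DecidableEq ι] (A : Matrix ι ι EReal) : Matrix ι ι EReal :=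
  fun i j => ⨆ k : ℕ, (((-(tfact k) : ℝ) : EReal) + mpPow A k i j)

/-- The scalar tropical exponential `E(a) = sup_k (k·a − k(k+1)/2)`. -/
def Escalar (a : ℝ) : ℝ := ⨆ k : ℕ, ((k : ℝ) * a - tfact k)

/-- Irreducibility: the digraph of `A` is strongly connected. -/
def mpIrreducible {ι : Type*} (A : Matrix ι ι EReal) : Prop :=
  ∀ i j, Relation.TransGen (fun u v => A u v ≠ ⊥) i j

/-- Robustness: the orbit of every nonzero vector over `𝕋` hits an eigenvector. -/
def mpRobust {n : ℕ} (A : Matrix (Fin n) (Fin n) EReal) : Prop :=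
  ∀ x : Fin n → EReal, (∀ i, x i ≠ ⊤) → x ≠ (fun _ => ⊥) →
    ∃ (r : ℕ) (lam : ℝ),
      mpMulVec (mpPow A r) x ≠ (fun _ => ⊥) ∧
      mpMulVec A (mpMulVec (mpPow A r) x) =
        fun i => (lam : EReal) + mpMulVec (mpPow A r) x i

/-- The weight of the closed walk `c 0 → c 1 → ⋯ → c m → c 0`. -/
def cycWeight {ι : Type*} {m : ℕ} (A : Matrix ι ι EReal) (c : Fin (m + 1) → ι) : EReal :=
  ∑ i : Fin (m + 1), A (c i) (c (i + 1))

/-- `c` is a cycle (closed walk) in the digraph of `A`. -/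
def isCycle {ι : Type*} {m : ℕ} (A : Matrix ι ι EReal) (c : Fin (m + 1) → ι) : Prop :=
  ∀ i, A (c i) (c (i + 1)) ≠ ⊥

/-- `lam` is the maximum cycle mean `λ(A)`: attained by some cycle and an upper bound. -/
def isMaxCycleMean {ι : Type*} (A : Matrix ι ι EReal) (lam : ℝ) : Prop :=
  (∃ (m : ℕ) (c : Fin (m + 1) → ι), isCycle A c ∧
      cycWeight A c = ((((m : ℝ) + 1) * lam : ℝ) : EReal)) ∧
  ∀ (m : ℕ) (c : Fin (m + 1) → ι), isCycle A c →
      cycWeight A c ≤ ((((m : ℝ) + 1) * lam : ℝ) : EReal)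

/-- A critical cycle: a cycle whose mean equals `lam = λ(A)`. -/
def isCritCycle {ι : Type*} {m : ℕ} (A : Matrix ι ι EReal) (lam : ℝ)
    (c : Fin (m + 1) → ι) : Prop :=
  isCycle A c ∧ cycWeight A c = ((((m : ℝ) + 1) * lam : ℝ) : EReal)

/-- `v` is a vertex of the critical digraph `C(A)`. -/
def critVertex {ι : Type*} (A : Matrix ι ι EReal) (lam : ℝ) (v : ι) : Prop :=
  ∃ (m : ℕ) (c : Fin (m + 1) → ι) (k : Fin (m + 1)), isCritCycle A lam c ∧ c k = v

/-- `u → v` is an edge of the critical digraph `C(A)`. -/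
def critEdge {ι : Type*} (A : Matrix ι ι EReal) (lam : ℝ) (u v : ι) : Prop :=
  ∃ (m : ℕ) (c : Fin (m + 1) → ι) (k : Fin (m + 1)),
    isCritCycle A lam c ∧ c k = u ∧ c (k + 1) = v

/-- `u` and `v` lie in the same strongly connected component of `C(A)`. -/
def sameCritSCC {ι : Type*} (A : Matrix ι ι EReal) (lam : ℝ) (u v : ι) : Prop :=
  Relation.ReflTransGen (critEdge A lam) u v ∧ Relation.ReflTransGen (critEdge A lam) v u

/-- `x` is a generalised eigenvector of `A` (a member of `GV(A)`):
`x ≠ ε`, `x` is over `𝕋`, and `A^(m) ⊗ x = (m·λ) ⊗ x` for some `m ≥ 1`, `λ ∈ ℝ`. -/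
def genEigvec {n : ℕ} (A : Matrix (Fin n) (Fin n) EReal) (x : Fin n → EReal) : Prop :=
  x ≠ (fun _ => ⊥) ∧ (∀ i, x i ≠ ⊤) ∧
    ∃ (m : ℕ) (lam : ℝ), 1 ≤ m ∧
      mpMulVec (mpPow A m) x = fun i => (((m : ℝ) * lam : ℝ) : EReal) + x i

/-- `A` is quasi-robust: the orbit of every nonzero vector over `𝕋` meets `GV(A)`. -/
def quasiRobust {n : ℕ} (A : Matrix (Fin n) (Fin n) EReal) : Prop :=
  ∀ x : Fin n → EReal, (∀ i, x i ≠ ⊤) → x ≠ (fun _ => ⊥) →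
    ∃ r : ℕ, genEigvec A (mpMulVec (mpPow A r) x)

-- Auxiliary lemmas

lemma exists_sup_eq {ι : Type*} [Finite ι] [Nonempty ι] (f : ι → EReal) :
    ∃ k, (⨆ i, f i) = f k := by
  obtain ⟨k, hk⟩ := Finite.exists_max f
  exact ⟨k, le_antisymm (iSup_le hk) (le_iSup f k)⟩

lemma add_iSup' {ι : Type*} [Finite ι] [Nonempty ι] (c : EReal) (f : ι → EReal) :
    c + (⨆ i, f i) = ⨆ i, c + f i := by
  obtain ⟨k, hk⟩ := exists_sup_eq f
  refine le_antisymm ?_ (iSup_le fun i => add_le_add (le_refl c) (le_iSup f i))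
  rw [hk]
  exact le_iSup (fun i => c + f i) k

lemma iSup_add' {ι : Type*} [Finite ι] [Nonempty ι] (c : EReal) (f : ι → EReal) :
    (⨆ i, f i) + c = ⨆ i, f i + c := by
  rw [add_comm, add_iSup']
  simp_rw [add_comm]

lemma iSup_ne_bot_of {ι : Type*} (f : ι → EReal) (k : ι) (h : f k ≠ ⊥) :
    (⨆ i, f i) ≠ ⊥ := by
  intro hb
  exact h (le_bot_iff.mp (hb ▸ le_iSup f k))

-- matrix algebra
lemma mpMul_mpId {n : ℕ} (A : Matrix (Fin n) (Fin n) EReal) : mpMul A mpId = A := by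
  funext i j
  show (⨆ k, A i k + (if k = j then (0:EReal) else ⊥)) = A i j
  refine le_antisymm (iSup_le fun k => ?_) ?_
  · by_cases h : k = j
    · subst h; simp
    · simp [h]
  · have := le_iSup (fun k => A i k + (if k = j then (0:EReal) else ⊥)) j
    simpa using this

lemma mpId_mpMul {n : ℕ} (A : Matrix (Fin n) (Fin n) EReal) : mpMul mpId A = A := by
  funext i j
  show (⨆ k, (if i = k then (0:EReal) else ⊥) + A k j) = A i j
  refine le_antisymm (iSup_le fun k => ?_) ?_
  · by_cases h : i = k
    · subst h; simp
    · simp [h]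
  · have := le_iSup (fun k => (if i = k then (0:EReal) else ⊥) + A k j) i
    simpa using this

lemma mpMul_assoc {n : ℕ} (hn : 0 < n) (A B C : Matrix (Fin n) (Fin n) EReal) :
    mpMul (mpMul A B) C = mpMul A (mpMul B C) := by
  have : Nonempty (Fin n) := ⟨⟨0, hn⟩⟩
  funext i j
  show (⨆ k, (⨆ l, A i l + B l k) + C k j) = ⨆ l, A i l + ⨆ k, B l k + C k j
  have h1 : ∀ k, (⨆ l, A i l + B l k) + C k j = ⨆ l, A i l + (B l k + C k j) := by
    intro k; rw [iSup_add']; simp_rw [add_assoc]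
  simp_rw [h1, add_iSup']
  exact iSup_comm

lemma mpPow_one {n : ℕ} (A : Matrix (Fin n) (Fin n) EReal) : mpPow A 1 = A := by
  show mpMul mpId A = A
  exact mpId_mpMul A

lemma mpPow_add {n : ℕ} (hn : 0 < n) (A : Matrix (Fin n) (Fin n) EReal) (a b : ℕ) :
    mpPow A (a + b) = mpMul (mpPow A a) (mpPow A b) := by
  induction b with
  | zero => exact (mpMul_mpId (mpPow A a)).symm
  | succ b ih =>
      show mpPow A (a + b + 1) = _
      show mpMul (mpPow A (a+b)) A = mpMul (mpPow A a) (mpMul (mpPow A b) A)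
      rw [ih, mpMul_assoc hn]

lemma mpPow_ne_top {n : ℕ} (hn : 0 < n) (A : Matrix (Fin n) (Fin n) EReal)
    (hA : ∀ i j, A i j ≠ ⊤) : ∀ k i j, mpPow A k i j ≠ ⊤ := by
  have : Nonempty (Fin n) := ⟨⟨0, hn⟩⟩
  intro k
  induction k with
  | zero =>
      intro i j
      show (if i = j then (0:EReal) else ⊥) ≠ ⊤
      split <;> simp
  | succ k ih =>
      intro i j
      show (⨆ l, mpPow A k i l + A l j) ≠ ⊤
      obtain ⟨l, hl⟩ := exists_sup_eq (fun l => mpPow A k i l + A l j)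
      rw [hl]
      exact (EReal.add_lt_top (ih i l) (hA l j)).ne

lemma transGen_pow_ne_bot {n : ℕ} (hn : 0 < n) (A : Matrix (Fin n) (Fin n) EReal)
    {i j : Fin n} (h : Relation.TransGen (fun u v => A u v ≠ ⊥) i j) :
    ∃ b, 1 ≤ b ∧ mpPow A b i j ≠ ⊥ := by
  induction h with
  | single hij => exact ⟨1, le_refl 1, by rw [mpPow_one]; exact hij⟩
  | @tail kk jj _ hkj ih =>
      obtain ⟨b, hb, hne⟩ := ih
      refine ⟨b + 1, by omega, ?_⟩
      show (⨆ l, mpPow A b i l + A l jj) ≠ ⊥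
      refine iSup_ne_bot_of _ kk ?_
      rw [Ne, EReal.add_eq_bot_iff]
      push_neg
      exact ⟨hne, hkj⟩

lemma col_shift {n : ℕ} (hn : 0 < n) (A : Matrix (Fin n) (Fin n) EReal)
    (m r : ℕ) (j : Fin n) (c : EReal)
    (h : ∀ i, mpPow A (m + r) i j = c + mpPow A r i j) :
    ∀ k, r ≤ k → ∀ i, mpPow A (k + m) i j = c + mpPow A k i j := by
  have : Nonempty (Fin n) := ⟨⟨0, hn⟩⟩
  intro k hk i
  obtain ⟨s, rfl⟩ : ∃ s, k = s + r := ⟨k - r, by omega⟩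
  have he : s + r + m = s + (m + r) := by omega
  rw [he, mpPow_add hn A s (m+r), mpPow_add hn A s r]
  show (⨆ l, mpPow A s i l + mpPow A (m+r) l j) = c + ⨆ l, mpPow A s i l + mpPow A r l j
  simp_rw [h, add_left_comm _ c]
  rw [← add_iSup']

lemma col_shift_iter {n : ℕ} (hn : 0 < n) (A : Matrix (Fin n) (Fin n) EReal)
    (m r : ℕ) (j : Fin n) (c : ℝ)
    (h : ∀ k, r ≤ k → ∀ i, mpPow A (k + m) i j = (c : EReal) + mpPow A k i j) :
    ∀ (t k), r ≤ k → ∀ i, mpPow A (k + t * m) i j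
      = (((t : ℝ) * c : ℝ) : EReal) + mpPow A k i j := by
  intro t
  induction t with
  | zero => intro k hk i; simp
  | succ t ih =>
      intro k hk i
      have he : k + (t + 1) * m = (k + t * m) + m := by ring
      have hc : (c + (t:ℝ) * c : ℝ) = (((t+1 : ℕ):ℝ) * c : ℝ) := by push_cast; ring
      rw [he, h (k + t*m) (by omega) i, ih k hk i, ← add_assoc, ← EReal.coe_add, hc]

lemma ne_bot_of_add {x y : EReal} (hx : x ≠ ⊥) (hy : y ≠ ⊥) : x + y ≠ ⊥ := by
  rw [Ne, EReal.add_eq_bot_iff]; push_neg; exact ⟨hx, hy⟩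

lemma rate_le {n : ℕ} (hn : 0 < n) (A : Matrix (Fin n) (Fin n) EReal)
    (hA : ∀ i j, A i j ≠ ⊤)
    (i j : Fin n) (ri rj mi mj : ℕ) (li lj : ℝ) (hmi : 1 ≤ mi) (hmj : 1 ≤ mj)
    (u : Fin n) (hu : mpPow A ri u i ≠ ⊥)
    (hpi : ∀ k, ri ≤ k → ∀ w, mpPow A (k + mi) w i
        = (((mi:ℝ) * li : ℝ) : EReal) + mpPow A k w i)
    (hpj : ∀ k, rj ≤ k → ∀ w, mpPow A (k + mj) w j
        = (((mj:ℝ) * lj : ℝ) : EReal) + mpPow A k w j)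
    (b : ℕ) (hb : mpPow A b i j ≠ ⊥)
    (a : ℕ) (ha : mpPow A a j i ≠ ⊥) : lj ≤ li := by
  have hne : Nonempty (Fin n) := ⟨⟨0, hn⟩⟩
  have hi2 := col_shift_iter hn A mi ri i ((mi:ℝ) * li) hpi
  have hj2 := col_shift_iter hn A mj rj j ((mj:ℝ) * lj) hpj
  set T := rj + 1 with hT
  set K := ri + (T * mj) * mi with hK
  have hKrj : rj ≤ K := by
    have h1 : T ≤ T * mj := Nat.le_mul_of_pos_right T (by omega)
    have h2 : T * mj ≤ T * mj * mi := Nat.le_mul_of_pos_right _ (by omega)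
    omega
  -- e_K ≠ ⊥
  have heK : mpPow A K u i ≠ ⊥ := by
    rw [hK, hi2 (T * mj) ri le_rfl u]
    exact ne_bot_of_add (EReal.coe_ne_bot _) hu
  -- F0 = A^{K+b} u j ≥ e_K + β
  have hF0 : mpPow A K u i + mpPow A b i j ≤ mpPow A (K + b) u j := by
    rw [mpPow_add hn A K b]
    exact le_iSup (fun l => mpPow A K u l + mpPow A b l j) i
  have hF0ne : mpPow A (K + b) u j ≠ ⊥ := by
    intro h
    exact ne_bot_of_add heK hb (le_bot_iff.mp (h ▸ hF0))
  -- Key chain for each t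
  have key : ∀ t : ℕ,
      ((((t * mi : ℕ) : ℝ) * ((mj : ℝ) * lj) : ℝ) : EReal) + mpPow A (K + b) u j
        + mpPow A a j i
      ≤ ((((t * mj : ℕ) : ℝ) * ((mi : ℝ) * li) : ℝ) : EReal)
        + mpPow A (K + a + b) u i := by
    intro t
    have hF : mpPow A ((K + b) + (t * mi) * mj) u j
        = ((((t * mi : ℕ) : ℝ) * ((mj : ℝ) * lj) : ℝ) : EReal) + mpPow A (K + b) u j :=
      hj2 (t * mi) (K + b) (by omega) u
    have hexp : (K + b) + (t * mi) * mj + a = (K + a + b) + (t * mj) * mi := by ring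
    have hE2 : mpPow A ((K + b) + (t * mi) * mj + a) u i
        = ((((t * mj : ℕ) : ℝ) * ((mi : ℝ) * li) : ℝ) : EReal) + mpPow A (K + a + b) u i := by
      rw [hexp]; exact hi2 (t * mj) (K + a + b) (by omega) u
    have hstep : mpPow A ((K + b) + (t * mi) * mj) u j + mpPow A a j i
        ≤ mpPow A ((K + b) + (t * mi) * mj + a) u i := by
      rw [mpPow_add hn A ((K + b) + (t * mi) * mj) a]
      exact le_iSup (fun l => mpPow A ((K + b) + (t * mi) * mj) u l + mpPow A a l i) j
    rw [hE2] at hstep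
    rw [hF] at hstep
    exact hstep
  -- E0 facts
  have hE0top : mpPow A (K + a + b) u i ≠ ⊤ := mpPow_ne_top hn A hA _ u i
  have hE0bot : mpPow A (K + a + b) u i ≠ ⊥ := by
    have h0 := key 0
    simp only [Nat.zero_mul, Nat.cast_zero, zero_mul, EReal.coe_zero, zero_add] at h0
    intro h
    rw [h] at h0
    exact ne_bot_of_add hF0ne ha (le_bot_iff.mp (by simpa using h0))
  -- convert to real inequality
  have hFtop : mpPow A (K + b) u j ≠ ⊤ := mpPow_ne_top hn A hA _ u j
  have hatop : mpPow A a j i ≠ ⊤ := mpPow_ne_top hn A hA _ j i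
  set E0 := (mpPow A (K + a + b) u i).toReal with hE0
  set F0 := (mpPow A (K + b) u j).toReal with hF0r
  set Ar := (mpPow A a j i).toReal with hAr
  have hcE : mpPow A (K + a + b) u i = ((E0 : ℝ) : EReal) := (EReal.coe_toReal hE0top hE0bot).symm
  have hcF : mpPow A (K + b) u j = ((F0 : ℝ) : EReal) := (EReal.coe_toReal hFtop hF0ne).symm
  have hcA : mpPow A a j i = ((Ar : ℝ) : EReal) := (EReal.coe_toReal hatop ha).symm
  have keyR : ∀ t : ℕ, ((t * mi : ℕ) : ℝ) * ((mj : ℝ) * lj) + F0 + Ar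
      ≤ ((t * mj : ℕ) : ℝ) * ((mi : ℝ) * li) + E0 := by
    intro t
    have := key t
    rw [hcE, hcF, hcA, ← EReal.coe_add, ← EReal.coe_add, ← EReal.coe_add] at this
    exact_mod_cast this
  -- conclude
  by_contra hlt
  push_neg at hlt
  have hQ : (0 : ℝ) < (mi : ℝ) * (mj : ℝ) := by positivity
  have hd : (0 : ℝ) < (mi : ℝ) * (mj : ℝ) * (lj - li) := by
    apply mul_pos hQ; linarith
  obtain ⟨t, ht⟩ := exists_nat_gt ((E0 - F0 - Ar) / ((mi : ℝ) * (mj : ℝ) * (lj - li)))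
  rw [div_lt_iff₀ hd] at ht
  have h := keyR t
  push_cast at h
  nlinarith [h, ht]

lemma mpMulVec_unit {n : ℕ} (M : Matrix (Fin n) (Fin n) EReal) (j : Fin n) :
    mpMulVec M (fun k => if k = j then (0:EReal) else ⊥) = fun i => M i j := by
  funext i
  show (⨆ k, M i k + if k = j then (0:EReal) else ⊥) = M i j
  refine le_antisymm (iSup_le fun k => ?_) ?_
  · by_cases h : k = j
    · subst h; simp
    · simp [h]
  · simpa using le_iSup (fun k => M i k + if k = j then (0:EReal) else ⊥) j

lemma mpMulVec_mpMul {n : ℕ} (hn : 0 < n) (B C : Matrix (Fin n) (Fin n) EReal)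
    (x : Fin n → EReal) :
    mpMulVec (mpMul B C) x = mpMulVec B (mpMulVec C x) := by
  have : Nonempty (Fin n) := ⟨⟨0, hn⟩⟩
  funext i
  show (⨆ k, (⨆ l, B i l + C l k) + x k) = ⨆ l, B i l + ⨆ k, C l k + x k
  have h1 : ∀ k, (⨆ l, B i l + C l k) + x k = ⨆ l, B i l + (C l k + x k) := by
    intro k; rw [iSup_add']; simp_rw [add_assoc]
  simp_rw [h1, add_iSup']
  exact iSup_comm


lemma mpMulVec_smulE {n : ℕ} (hn : 0 < n) (c : ℝ) (M : Matrix (Fin n) (Fin n) EReal)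
    (x : Fin n → EReal) :
    mpMulVec (smulE c M) x = fun i => (c : EReal) + mpMulVec M x i := by
  have : Nonempty (Fin n) := ⟨⟨0, hn⟩⟩
  funext i
  show (⨆ k, ((c:EReal) + M i k) + x k) = (c:EReal) + ⨆ k, M i k + x k
  simp_rw [add_assoc]
  rw [← add_iSup']

theorem stmt_16 {n : ℕ} (A : Matrix (Fin n) (Fin n) EReal)
    (hA : ∀ i j, A i j ≠ ⊤) (hirr : mpIrreducible A) :
    quasiRobust A ↔
      ∃ (p : ℕ) (lam : ℝ) (k₀ : ℕ), 1 ≤ p ∧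
        ∀ k, k₀ ≤ k → mpPow A (k + p) = smulE ((p : ℝ) * lam) (mpPow A k) := by
  rcases Nat.eq_zero_or_pos n with h0 | hn
  · subst h0
    constructor
    · intro _
      exact ⟨1, 0, 0, le_rfl, fun k _ => funext fun i => i.elim0⟩
    · intro _ x hxt hxb
      exact absurd (funext fun i => i.elim0) hxb
  have hnE : Nonempty (Fin n) := ⟨⟨0, hn⟩⟩
  constructor
  · -- quasi-robust → ultimately periodic
    intro hq
    have Hdata : ∀ j : Fin n, ∃ (r m : ℕ) (lam : ℝ), 1 ≤ m ∧
        (∃ u, mpPow A r u j ≠ ⊥) ∧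
        ∀ k, r ≤ k → ∀ i, mpPow A (k + m) i j
          = (((m:ℝ) * lam : ℝ) : EReal) + mpPow A k i j := by
      intro j
      obtain ⟨r, hnb, hnt, m, lam, hm, heq⟩ :=
        hq (fun k => if k = j then (0:EReal) else ⊥)
          (by intro i; split <;> simp)
          (by intro h; have := congrFun h j; simp at this)
      rw [mpMulVec_unit (mpPow A r) j] at hnb heq
      have heq' : ∀ i, mpPow A (m + r) i j
          = (((m:ℝ) * lam : ℝ) : EReal) + mpPow A r i j := by
        intro i
        have h3 := congrFun heq i
        rw [mpPow_add hn A m r]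
        exact h3
      have hu : ∃ u, mpPow A r u j ≠ ⊥ := by
        by_contra h
        push_neg at h
        exact hnb (funext fun i => h i)
      exact ⟨r, m, lam, hm, hu, col_shift hn A m r j _ heq'⟩
    choose r m lam hm hu hper using Hdata
    set j0 : Fin n := ⟨0, hn⟩ with hj0
    have hlam : ∀ j, lam j = lam j0 := by
      intro j
      obtain ⟨u, huj⟩ := hu j
      obtain ⟨u0, hu0⟩ := hu j0
      obtain ⟨b, _, hbne⟩ := transGen_pow_ne_bot hn A (hirr j j0)
      obtain ⟨a, _, hane⟩ := transGen_pow_ne_bot hn A (hirr j0 j)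
      have h1 : lam j0 ≤ lam j :=
        rate_le hn A hA j j0 (r j) (r j0) (m j) (m j0) (lam j) (lam j0)
          (hm j) (hm j0) u huj (hper j) (hper j0) b hbne a hane
      have h2 : lam j ≤ lam j0 :=
        rate_le hn A hA j0 j (r j0) (r j) (m j0) (m j) (lam j0) (lam j)
          (hm j0) (hm j) u0 hu0 (hper j0) (hper j) a hane b hbne
      linarith
    set p : ℕ := ∏ j, m j with hpdef
    have hp1 : 1 ≤ p := by
      rw [hpdef]
      exact Finset.one_le_prod' fun j _ => hm j
    refine ⟨p, lam j0, Finset.univ.sup r, hp1, ?_⟩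
    intro k hk
    funext i j
    have hdvd : m j ∣ p := Finset.dvd_prod_of_mem m (Finset.mem_univ j)
    have htm : p / m j * m j = p := Nat.div_mul_cancel hdvd
    have hrk : r j ≤ k :=
      le_trans (Finset.le_sup (Finset.mem_univ j)) hk
    have hit := col_shift_iter hn A (m j) (r j) j ((m j : ℝ) * lam j)
      (hper j) (p / m j) k hrk i
    rw [htm] at hit
    show mpPow A (k + p) i j = (((p:ℝ) * lam j0 : ℝ) : EReal) + mpPow A k i j
    have hre : ((p / m j : ℕ) : ℝ) * ((m j : ℝ) * lam j) = (p : ℝ) * lam j0 := by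
      rw [hlam j]
      nth_rewrite 2 [← htm]
      push_cast
      ring
    rw [hit, hre]
  · -- ultimately periodic → quasi-robust
    rintro ⟨p, lam, k0, hp, hperiod⟩ x hxt hxb
    obtain ⟨j, hj⟩ : ∃ j, x j ≠ ⊥ := by
      by_contra h
      push_neg at h
      exact hxb (funext fun i => h i)
    obtain ⟨c, hc1, hcne⟩ := transGen_pow_ne_bot hn A (hirr j j)
    have hdiag : ∀ t, mpPow A (t * c) j j ≠ ⊥ := by
      intro t
      induction t with
      | zero => simp [mpPow, mpId]
      | succ t ih =>
          have he : (t + 1) * c = t * c + c := by ring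
          rw [he, mpPow_add hn A (t * c) c]
          exact iSup_ne_bot_of _ j (ne_bot_of_add ih hcne)
    set rr := (k0 + 1) * c with hrr
    have hrk0 : k0 ≤ rr := by
      have := Nat.le_mul_of_pos_right (k0 + 1) (show 0 < c by omega)
      omega
    refine ⟨rr, ?_, ?_, p, lam, hp, ?_⟩
    · -- nonzero
      intro h
      have := congrFun h j
      have hne : mpMulVec (mpPow A rr) x j ≠ ⊥ :=
        iSup_ne_bot_of (fun k => mpPow A rr j k + x k) j
          (ne_bot_of_add (hdiag (k0 + 1)) hj)
      exact hne this
    · -- no top entries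
      intro i
      show (⨆ k, mpPow A rr i k + x k) ≠ ⊤
      obtain ⟨k, hk⟩ := exists_sup_eq (fun k => mpPow A rr i k + x k)
      rw [hk]
      exact (EReal.add_lt_top (mpPow_ne_top hn A hA rr i k) (hxt k)).ne
    · -- eigen equation
      have hcomp : mpMulVec (mpPow A p) (mpMulVec (mpPow A rr) x)
          = mpMulVec (mpPow A (p + rr)) x := by
        rw [mpPow_add hn A p rr, mpMulVec_mpMul hn]
      rw [hcomp]
      have hpr : p + rr = rr + p := by ring
      rw [hpr, hperiod rr hrk0, mpMulVec_smulE hn]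


end
end

section
/- Let A ∈ M_n(𝕋) be irreducible and ultimately periodic with per(A) = p > 1 and rate λ ∈ ℝ. Then A has a generalised eigenvector of order p: there exists x ∈ 𝕋^n with x ≠ (ε,…,ε) such that A^(p) ⊗ x = (p·λ) ⊗ x but A^(p−1) ⊗ x ≠ ((p−1)·λ) ⊗ x. -/
noncomputable section

section MyAux

lemma my_fin_iSup_eq {ι : Type*} [Finite ι] [Nonempty ι] (f : ι → EReal) :
    ∃ i, (⨆ j, f j) = f i := by
  obtain ⟨i, hi⟩ := Finite.exists_max f
  exact ⟨i, le_antisymm (iSup_le hi) (le_iSup f i)⟩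

lemma my_ereal_add_iSup {ι : Type*} [Finite ι] [Nonempty ι] (a : EReal) (f : ι → EReal) :
    a + ⨆ i, f i = ⨆ i, a + f i := by
  obtain ⟨i₀, h⟩ := Finite.exists_max f
  have hs : (⨆ i, f i) = f i₀ := le_antisymm (iSup_le h) (le_iSup f i₀)
  rw [hs]
  exact le_antisymm (le_iSup (fun i => a + f i) i₀)
    (iSup_le fun i => add_le_add le_rfl (h i))

lemma my_ereal_iSup_add {ι : Type*} [Finite ι] [Nonempty ι] (a : EReal) (f : ι → EReal) :
    (⨆ i, f i) + a = ⨆ i, f i + a := by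
  simp_rw [add_comm _ a]
  exact my_ereal_add_iSup a f

lemma my_mpMul_assoc {ι κ μ ν : Type*} [Finite κ] [Nonempty κ] [Finite μ] [Nonempty μ]
    (A : Matrix ι κ EReal) (B : Matrix κ μ EReal) (C : Matrix μ ν EReal) :
    mpMul (mpMul A B) C = mpMul A (mpMul B C) := by
  funext i j
  show (⨆ l, (⨆ k, A i k + B k l) + C l j) = ⨆ k, A i k + ⨆ l, B k l + C l j
  calc (⨆ l, (⨆ k, A i k + B k l) + C l j)
      = ⨆ l, ⨆ k, (A i k + B k l) + C l j :=
        iSup_congr fun l => my_ereal_iSup_add _ _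
    _ = ⨆ k, ⨆ l, A i k + (B k l + C l j) := by
        rw [iSup_comm]; simp_rw [add_assoc]
    _ = ⨆ k, A i k + ⨆ l, B k l + C l j :=
        iSup_congr fun k => (my_ereal_add_iSup _ _).symm

lemma my_mpMul_mpId {ι κ : Type*} [DecidableEq κ] [Fintype κ]
    (B : Matrix ι κ EReal) : mpMul B mpId = B := by
  funext i j
  show (⨆ k, B i k + mpId k j) = B i j
  apply le_antisymm
  · refine iSup_le fun k => ?_
    by_cases h : k = j
    · subst h; simp [mpId]
    · simp [mpId, h]
  · refine le_iSup_of_le j ?_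
    simp [mpId]

lemma my_mpPow_add {ι : Type*} [Fintype ι] [DecidableEq ι] [Nonempty ι]
    (A : Matrix ι ι EReal) (m k : ℕ) :
    mpPow A (m + k) = mpMul (mpPow A m) (mpPow A k) := by
  induction k with
  | zero => simpa [mpPow] using (my_mpMul_mpId (mpPow A m)).symm
  | succ k ih =>
      have h1 : mpPow A (m + (k + 1)) = mpMul (mpPow A (m + k)) A := rfl
      have h2 : mpPow A (k + 1) = mpMul (mpPow A k) A := rfl
      rw [h1, h2, ih, my_mpMul_assoc]

lemma my_col_ne_bot {n : ℕ} (A : Matrix (Fin n) (Fin n) EReal)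
    (hirr : mpIrreducible A) (k : ℕ) (j : Fin n) :
    ∃ i, mpPow A k i j ≠ ⊥ := by
  induction k generalizing j with
  | zero => exact ⟨j, by simp [mpPow, mpId]⟩
  | succ k ih =>
      have hl : ∃ l, A l j ≠ ⊥ := by
        cases hirr j j with
        | single h => exact ⟨j, h⟩
        | tail _ h => exact ⟨_, h⟩
      obtain ⟨l, hl⟩ := hl
      obtain ⟨i, hi⟩ := ih l
      refine ⟨i, fun hb => ?_⟩
      have hle : mpPow A k i l + A l j ≤ mpPow A (k + 1) i j :=
        le_iSup (fun m => mpPow A k i m + A m j) l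
      rw [hb] at hle
      have hbot : mpPow A k i l + A l j = ⊥ := le_bot_iff.mp hle
      rcases EReal.add_eq_bot_iff.mp hbot with h | h
      · exact hi h
      · exact hl h

lemma my_pow_ne_top {n : ℕ} [Nonempty (Fin n)] (A : Matrix (Fin n) (Fin n) EReal)
    (hA : ∀ i j, A i j ≠ ⊤) (k : ℕ) (i j : Fin n) :
    mpPow A k i j ≠ ⊤ := by
  induction k generalizing i j with
  | zero => simp only [mpPow, mpId]; split <;> simp
  | succ k ih =>
      obtain ⟨l, hl⟩ := my_fin_iSup_eq (fun m => mpPow A k i m + A m j)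
      show (⨆ m, mpPow A k i m + A m j) ≠ ⊤
      rw [hl]
      exact (EReal.add_lt_top (ih i l) (hA l j)).ne

end MyAux

theorem stmt_17 {n : ℕ} (A : Matrix (Fin n) (Fin n) EReal)
    (hA : ∀ i j, A i j ≠ ⊤) (hirr : mpIrreducible A)
    (p : ℕ) (hp : 1 < p) (lam : ℝ)
    (hper : ∃ k₀ : ℕ, ∀ k, k₀ ≤ k →
      mpPow A (k + p) = smulE ((p : ℝ) * lam) (mpPow A k))
    (hmin : ∀ q : ℕ, 1 ≤ q → q < p →
      ¬ ∃ (μ : ℝ) (k₁ : ℕ), ∀ k, k₁ ≤ k →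
        mpPow A (k + q) = smulE ((q : ℝ) * μ) (mpPow A k)) :
    ∃ x : Fin n → EReal, x ≠ (fun _ => ⊥) ∧ (∀ i, x i ≠ ⊤) ∧
      mpMulVec (mpPow A p) x = (fun i => (((p : ℝ) * lam : ℝ) : EReal) + x i) ∧
      mpMulVec (mpPow A (p - 1)) x ≠
        (fun i => ((((p : ℝ) - 1) * lam : ℝ) : EReal) + x i) := by
  rcases Nat.eq_zero_or_pos n with hn | hn
  · exfalso
    subst hn
    refine hmin 1 le_rfl hp ⟨0, 0, fun k _ => ?_⟩
    funext i
    exact i.elim0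
  haveI : Nonempty (Fin n) := ⟨⟨0, hn⟩⟩
  obtain ⟨k₀, hk₀⟩ := hper
  have hcast : (((p - 1 : ℕ) : ℝ)) = (p : ℝ) - 1 := by
    have : 1 ≤ p := hp.le
    push_cast [Nat.cast_sub this]
    ring
  have hex : ∃ k, k₀ ≤ k ∧
      mpPow A (k + (p - 1)) ≠ smulE (((p - 1 : ℕ) : ℝ) * lam) (mpPow A k) := by
    by_contra h
    push_neg at h
    exact hmin (p - 1) (by omega) (by omega) ⟨lam, k₀, fun k hk => h k hk⟩
  obtain ⟨k, hk, hne⟩ := hex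
  have hij : ∃ i j, mpPow A (k + (p - 1)) i j ≠
      (((((p - 1 : ℕ) : ℝ) * lam : ℝ)) : EReal) + mpPow A k i j := by
    by_contra h
    push_neg at h
    exact hne (by funext i j; exact h i j)
  obtain ⟨i, j, hdiff⟩ := hij
  refine ⟨fun i => mpPow A k i j, ?_, fun i => my_pow_ne_top A hA k i j, ?_, ?_⟩
  · obtain ⟨i₀, hi₀⟩ := my_col_ne_bot A hirr k j
    intro h
    exact hi₀ (congrFun h i₀)
  · funext i
    show mpMul (mpPow A p) (mpPow A k) i j = _
    rw [← my_mpPow_add, Nat.add_comm, hk₀ k hk]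
    rfl
  · intro h
    have hthis := congrFun h i
    have key : mpMulVec (mpPow A (p - 1)) (fun i => mpPow A k i j) i =
        mpPow A (k + (p - 1)) i j := by
      show mpMul (mpPow A (p - 1)) (mpPow A k) i j = _
      rw [← my_mpPow_add, Nat.add_comm]
    rw [key, ← hcast] at hthis
    exact hdiff hthis

end
end
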